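/- Let ξ be a white noise on R² (an isonormal Gaussian process on L²(R²)) and fix a wavelet basis {ψ^n_x : n ≥ 0, x ∈ Λ_n, ψ ∈ Ψ} ∪ {φ^0_x : x ∈ Λ_0} of L²(R²) with compactly supported C^r mother wavelets, where Λ_n = 2^{-n}Z². Then for every α < -1, a > 0 and p ∈ N with 2pa > 2 and 2p(α+1) < -2, one has E[ sup_{n ≥ 0} sup_{ψ ∈ Ψ} sup_{x ∈ Λ_n} ( |⟨ξ, ψ^n_x⟩| / (2^{-n(α+1)} (1+|x|)^a) )^{2p} ] < ∞; in particular the supremum is almost surely finite. -/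

import Mathlib

/-!
Every coefficient `⟨ξ, ψ^n_x⟩` is standard Gaussian, so the `2p`-th moment of each normalized
coefficient is a Gaussian moment times `2^{2pn(α+1)} (1+|x|)^{-2pa}`. Bounding the supremum by the
sum over all `(n, ψ, x)`, it suffices that these weights are summable. For fixed `n`, comparing
`(1+|x|)^{-2pa}` with a product of one-dimensional weights and grouping `ℤ` into blocks of length
`2^n` shows `∑_{x ∈ Λ_n} (1+|x|)^{-2pa} ≲ 4^n` as soon as `pa > 1`; the sum over `n` is then
geometric with ratio `2^{2p(α+1)+2} < 1`.
-/

noncomputable section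

open MeasureTheory ProbabilityTheory ENNReal

lemma lintegral_ofReal_abs_pow_gaussianReal_lt_top (μ : ℝ) (v : NNReal) (m : ℕ) :
    ∫⁻ x, ENNReal.ofReal |x| ^ m ∂gaussianReal μ v < ∞ := by
  rcases eq_or_ne m 0 with rfl | hm
  · simp
  have h := lintegral_rpow_enorm_lt_top_of_eLpNorm_lt_top (by simpa using hm) (by simp)
    (memLp_id_gaussianReal (μ := μ) (v := v) m).eLpNorm_lt_top
  simpa [Real.enorm_eq_ofReal_abs] using h

lemma lintegral_ofReal_abs_div_pow_of_map_eq {Ω : Type*} [MeasurableSpace Ω] {P : Measure Ω}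
    {X : Ω → ℝ} {ν : Measure ℝ} (hX : Measurable X) (hν : P.map X = ν) (c : ℝ) (m : ℕ) :
    ∫⁻ ω, ENNReal.ofReal (|X ω| / c) ^ m ∂P =
      ENNReal.ofReal c⁻¹ ^ m * ∫⁻ x, ENNReal.ofReal |x| ^ m ∂ν := by
  have hmeas : Measurable fun x : ℝ => ENNReal.ofReal |x| ^ m := by fun_prop
  simp_rw [div_eq_mul_inv, ENNReal.ofReal_mul (abs_nonneg _), mul_pow]
  rw [lintegral_mul_const' _ _ (by simp), mul_comm, ← hν, lintegral_map hmeas hX]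

lemma lintegral_iSup_pow_lt_top_of_tsum_lt_top {ι Ω : Type*} [Countable ι] [MeasurableSpace Ω]
    {μ : Measure Ω} {f : ι → Ω → ℝ≥0∞} (hf : ∀ i, AEMeasurable (f i) μ) {m : ℕ} (hm : m ≠ 0)
    (h : ∑' i, ∫⁻ ω, f i ω ^ m ∂μ < ∞) :
    ∫⁻ ω, ⨆ i, f i ω ^ m ∂μ < ∞ ∧ ∀ᵐ ω ∂μ, ⨆ i, f i ω < ∞ := by
  have hmeas (i : ι) : AEMeasurable (fun ω => f i ω ^ m) μ := (hf i).pow_const m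
  have hint : ∫⁻ ω, ⨆ i, f i ω ^ m ∂μ < ∞ := by
    refine lt_of_le_of_lt ?_ (lintegral_tsum hmeas ▸ h)
    exact lintegral_mono fun ω => iSup_le fun i => ENNReal.le_tsum (f := fun i => f i ω ^ m) i
  refine ⟨hint, ?_⟩
  filter_upwards [ae_lt_top' (AEMeasurable.iSup hmeas) hint.ne] with ω hω
  rw [← ENNReal.iSup_pow_of_ne_zero hm] at hω
  simpa [hm] using hω

lemma tsum_ofReal_one_add_abs_rpow_neg_lt_top {s : ℝ} (hs : 1 < s) :
    ∑' q : ℤ, ENNReal.ofReal ((1 + |(q : ℝ)|) ^ (-s)) < ∞ := by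
  have hnat : Summable fun n : ℕ => (1 + (n : ℝ)) ^ (-s) := by
    simpa [add_comm] using (summable_nat_add_iff 1).mpr (Real.summable_nat_rpow.mpr (by linarith))
  have hint : Summable fun q : ℤ => (1 + |(q : ℝ)|) ^ (-s) :=
    .of_nat_of_neg (by simpa using hnat) (by simpa using hnat)
  rw [← ENNReal.ofReal_tsum_of_nonneg (fun q => by positivity) hint]
  exact ENNReal.ofReal_lt_top

lemma one_add_abs_ediv_le_two_mul (j : ℤ) {N : ℕ} (hN : 0 < N) :
    1 + |((j / N : ℤ) : ℝ)| ≤ 2 * (1 + |(j : ℝ)| / N) := by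
  have hNℝ : (0 : ℝ) < N := by exact_mod_cast hN
  have hr0 : (0 : ℝ) ≤ ((j % N : ℤ) : ℝ) := by exact_mod_cast Int.emod_nonneg j (by omega)
  have hrN : ((j % N : ℤ) : ℝ) < N := by exact_mod_cast Int.emod_lt_of_pos j (by omega)
  have hdecomp : (N : ℝ) * ((j / N : ℤ) : ℝ) = j - ((j % N : ℤ) : ℝ) := by
    rw [eq_sub_iff_add_eq, add_comm]
    exact_mod_cast Int.emod_add_mul_ediv j N
  have hq : (N : ℝ) * |((j / N : ℤ) : ℝ)| ≤ |(j : ℝ)| + N := by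
    rw [← abs_of_pos hNℝ, ← abs_mul, hdecomp, abs_of_pos hNℝ]
    exact (abs_sub _ _).trans (by rw [abs_of_nonneg hr0]; linarith)
  have hq' : |((j / N : ℤ) : ℝ)| ≤ |(j : ℝ)| / N + 1 := by
    rw [div_add_one hNℝ.ne', le_div_iff₀ hNℝ]
    linarith
  linarith [div_nonneg (abs_nonneg (j : ℝ)) hNℝ.le]

lemma tsum_ofReal_one_add_abs_div_rpow_neg_le {s : ℝ} (hs : 0 ≤ s) (N : ℕ) [NeZero N] :
    ∑' j : ℤ, ENNReal.ofReal ((1 + |(j : ℝ)| / N) ^ (-s)) ≤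
      N * ENNReal.ofReal (2 ^ s) * ∑' q : ℤ, ENNReal.ofReal ((1 + |(q : ℝ)|) ^ (-s)) := by
  have hN : 0 < N := Nat.pos_of_ne_zero (NeZero.ne N)
  have hterm (j : ℤ) : ENNReal.ofReal ((1 + |(j : ℝ)| / N) ^ (-s)) ≤
      ENNReal.ofReal (2 ^ s) * ENNReal.ofReal ((1 + |((j / N : ℤ) : ℝ)|) ^ (-s)) := by
    rw [← ENNReal.ofReal_mul (by positivity)]
    refine ENNReal.ofReal_le_ofReal ?_
    calc (1 + |(j : ℝ)| / N) ^ (-s) ≤ ((1 + |((j / N : ℤ) : ℝ)|) / 2) ^ (-s) :=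
          Real.rpow_le_rpow_of_nonpos (by positivity)
            (by linarith [one_add_abs_ediv_le_two_mul j hN]) (neg_nonpos.2 hs)
      _ = 2 ^ s * (1 + |((j / N : ℤ) : ℝ)|) ^ (-s) := by
          rw [Real.div_rpow (by positivity) zero_le_two, Real.rpow_neg zero_le_two, div_inv_eq_mul,
            mul_comm]
  calc ∑' j : ℤ, ENNReal.ofReal ((1 + |(j : ℝ)| / N) ^ (-s))
      ≤ ∑' j : ℤ, ENNReal.ofReal (2 ^ s) * ENNReal.ofReal ((1 + |((j / N : ℤ) : ℝ)|) ^ (-s)) :=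
        ENNReal.tsum_le_tsum hterm
    _ = ∑' x : ℤ × Fin N, ENNReal.ofReal (2 ^ s) * ENNReal.ofReal ((1 + |(x.1 : ℝ)|) ^ (-s)) :=
        (Int.divModEquiv N).tsum_eq
          (fun x : ℤ × Fin N => ENNReal.ofReal (2 ^ s) * ENNReal.ofReal ((1 + |(x.1 : ℝ)|) ^ (-s)))
    _ = _ := by
        simp only [ENNReal.tsum_prod', tsum_fintype, Finset.sum_const, Finset.card_univ,
          Fintype.card_fin, nsmul_eq_mul, ENNReal.tsum_mul_left]
        ring

lemma one_add_abs_mul_one_add_abs_le_sq (v : EuclideanSpace ℝ (Fin 2)) :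
    (1 + |v 0|) * (1 + |v 1|) ≤ (1 + ‖v‖) ^ 2 := by
  have h (i : Fin 2) : 1 + |v i| ≤ 1 + ‖v‖ := by
    simpa [Real.norm_eq_abs] using PiLp.norm_apply_le v i
  rw [sq]
  exact mul_le_mul (h 0) (h 1) (by positivity) (by positivity)

lemma ENNReal.tsum_fin_two_mul {α : Type*} (g : α → ℝ≥0∞) :
    ∑' k : Fin 2 → α, g (k 0) * g (k 1) = (∑' a, g a) ^ 2 := by
  rw [← (finTwoArrowEquiv α).symm.tsum_eq, ENNReal.tsum_prod', sq, ← ENNReal.tsum_mul_right]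
  simp [ENNReal.tsum_mul_left]

def dyadicPoint (n : ℕ) (k : Fin 2 → ℤ) : WithLp 2 (Fin 2 → ℝ) :=
  (WithLp.equiv 2 (Fin 2 → ℝ)).symm (fun i => (2 : ℝ) ^ (-(n : ℤ)) * (k i : ℝ))

def waveletWeight (α a : ℝ) (n : ℕ) (k : Fin 2 → ℤ) : ℝ :=
  (2 : ℝ) ^ (-(n : ℝ) * (α + 1)) * (1 + ‖dyadicPoint n k‖) ^ a

lemma abs_dyadicPoint_apply (n : ℕ) (k : Fin 2 → ℤ) (i : Fin 2) :
    |dyadicPoint n k i| = |(k i : ℝ)| / (2 ^ n : ℕ) := by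
  simp [dyadicPoint, abs_mul, div_eq_inv_mul]

lemma tsum_ofReal_one_add_norm_dyadicPoint_rpow_neg_le {s : ℝ} (hs : 0 ≤ s) (n : ℕ) :
    ∑' k, ENNReal.ofReal ((1 + ‖dyadicPoint n k‖) ^ (-(2 * s))) ≤
      4 ^ n * (ENNReal.ofReal (2 ^ s) * ∑' q : ℤ, ENNReal.ofReal ((1 + |(q : ℝ)|) ^ (-s))) ^ 2 := by
  set g : ℤ → ℝ≥0∞ := fun j => ENNReal.ofReal ((1 + |(j : ℝ)| / (2 ^ n : ℕ)) ^ (-s))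
  have hterm (k : Fin 2 → ℤ) :
      ENNReal.ofReal ((1 + ‖dyadicPoint n k‖) ^ (-(2 * s))) ≤ g (k 0) * g (k 1) := by
    have hprod := one_add_abs_mul_one_add_abs_le_sq (dyadicPoint n k)
    simp only [abs_dyadicPoint_apply] at hprod
    have hsq : (1 + ‖dyadicPoint n k‖) ^ (-(2 * s)) = ((1 + ‖dyadicPoint n k‖) ^ 2) ^ (-s) := by
      rw [← Real.rpow_natCast, ← Real.rpow_mul (by positivity)]
      norm_num
    rw [← ENNReal.ofReal_mul (by positivity), ← Real.mul_rpow (by positivity) (by positivity), hsq]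
    exact ENNReal.ofReal_le_ofReal
      (Real.rpow_le_rpow_of_nonpos (by positivity) hprod (neg_nonpos.2 hs))
  calc ∑' k, ENNReal.ofReal ((1 + ‖dyadicPoint n k‖) ^ (-(2 * s)))
      ≤ ∑' k : Fin 2 → ℤ, g (k 0) * g (k 1) := ENNReal.tsum_le_tsum hterm
    _ = (∑' j, g j) ^ 2 := ENNReal.tsum_fin_two_mul g
    _ ≤ _ := by
      grw [tsum_ofReal_one_add_abs_div_rpow_neg_le hs]
      rw [mul_assoc, mul_pow, Nat.cast_pow, ← pow_mul, pow_mul']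
      norm_num

lemma ofReal_inv_waveletWeight_pow (α a : ℝ) (m n : ℕ) (k : Fin 2 → ℤ) :
    ENNReal.ofReal (waveletWeight α a n k)⁻¹ ^ m =
      ENNReal.ofReal (2 ^ (m * (α + 1))) ^ n *
        ENNReal.ofReal ((1 + ‖dyadicPoint n k‖) ^ (-(m * a))) := by
  have hB : 0 ≤ 1 + ‖dyadicPoint n k‖ := by positivity
  have hw : 0 ≤ (waveletWeight α a n k)⁻¹ := by unfold waveletWeight; positivity
  rw [← ENNReal.ofReal_pow hw, ← ENNReal.ofReal_pow (by positivity),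
    ← ENNReal.ofReal_mul (by positivity), waveletWeight, mul_inv,
    ← Real.rpow_neg zero_le_two, ← Real.rpow_neg hB, mul_pow, ← Real.rpow_mul_natCast zero_le_two,
    ← Real.rpow_mul_natCast hB, ← Real.rpow_mul_natCast zero_le_two]
  ring_nf

lemma tsum_ofReal_inv_waveletWeight_pow_le (α : ℝ) {a : ℝ} (ha : 0 ≤ a) (m n : ℕ) :
    ∑' k, ENNReal.ofReal (waveletWeight α a n k)⁻¹ ^ m ≤
      ENNReal.ofReal (2 ^ (m * (α + 1) + 2)) ^ n *
        (ENNReal.ofReal (2 ^ (m * a / 2)) *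
          ∑' q : ℤ, ENNReal.ofReal ((1 + |(q : ℝ)|) ^ (-(m * a / 2)))) ^ 2 := by
  have hlattice :=
    tsum_ofReal_one_add_norm_dyadicPoint_rpow_neg_le (s := m * a / 2) (by positivity) n
  rw [show 2 * ((m : ℝ) * a / 2) = m * a by ring] at hlattice
  simp_rw [ofReal_inv_waveletWeight_pow, ENNReal.tsum_mul_left]
  grw [hlattice]
  rw [Real.rpow_add two_pos, ENNReal.ofReal_mul (by positivity)]
  norm_num
  exact le_of_eq (by ring)

lemma tsum_tsum_ofReal_inv_waveletWeight_pow_lt_top {α a : ℝ} {m : ℕ} (ha : 2 < m * a)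
    (hα : m * (α + 1) < -2) :
    ∑' n, ∑' k, ENNReal.ofReal (waveletWeight α a n k)⁻¹ ^ m < ∞ := by
  have ha0 : 0 ≤ a := by
    by_contra! h
    nlinarith [m.cast_nonneg (α := ℝ)]
  have hratio : ENNReal.ofReal (2 ^ (m * (α + 1) + 2)) < 1 := by
    rw [ENNReal.ofReal_lt_one]
    exact Real.rpow_lt_one_of_one_lt_of_neg one_lt_two (by linarith)
  have hgeom := tsum_geometric_lt_top.2 hratio
  have hZ := tsum_ofReal_one_add_abs_rpow_neg_lt_top (s := m * a / 2) (by linarith)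
  refine lt_of_le_of_lt
    (ENNReal.tsum_le_tsum fun n => tsum_ofReal_inv_waveletWeight_pow_le α ha0 m n) ?_
  rw [ENNReal.tsum_mul_right]
  finiteness

/-- The coefficient `⟨ξ, ψ^n_x⟩` at `x = 2^{-n} k` is `X n ψ k`, standard Gaussian since
`‖ψ^n_x‖_{L²} = 1`. -/
theorem white_noise_wavelet_sup_moment_general
    (Ω : Type*) [MeasurableSpace Ω] (P : Measure Ω)
    (Ψ : Type*) [Fintype Ψ]
    (X : ℕ → Ψ → (Fin 2 → ℤ) → Ω → ℝ)
    (hXmeas : ∀ n ψ k, Measurable (X n ψ k))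
    (hXlaw : ∀ n ψ k, P.map (X n ψ k) = gaussianReal 0 1)
    (α a : ℝ) (p : ℕ)
    (hp1 : 2 < 2 * (p : ℝ) * a) (hp2 : 2 * (p : ℝ) * (α + 1) < -2) :
    (∫⁻ ω, ⨆ (n : ℕ) (ψ : Ψ) (k : Fin 2 → ℤ),
        (ENNReal.ofReal (|X n ψ k ω| /
          ((2 : ℝ) ^ (-(n : ℝ) * (α + 1)) *
            (1 + ‖(WithLp.equiv 2 (Fin 2 → ℝ)).symm
              (fun i => (2 : ℝ) ^ (-(n : ℤ)) * (k i : ℝ))‖) ^ a))) ^ (2 * p) ∂P) < ⊤ ∧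
    ∀ᵐ ω ∂P, (⨆ (n : ℕ) (ψ : Ψ) (k : Fin 2 → ℤ),
        ENNReal.ofReal (|X n ψ k ω| /
          ((2 : ℝ) ^ (-(n : ℝ) * (α + 1)) *
            (1 + ‖(WithLp.equiv 2 (Fin 2 → ℝ)).symm
              (fun i => (2 : ℝ) ^ (-(n : ℤ)) * (k i : ℝ))‖) ^ a))) < ⊤ := by
  have hp : 2 * p ≠ 0 := by
    rintro h
    obtain rfl : p = 0 := by omega
    norm_num at hp1
  set f : ℕ × Ψ × (Fin 2 → ℤ) → Ω → ℝ≥0∞ :=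
    fun i ω => ENNReal.ofReal (|X i.1 i.2.1 i.2.2 ω| / waveletWeight α a i.1 i.2.2)
  have hf (i : ℕ × Ψ × (Fin 2 → ℤ)) : AEMeasurable (f i) P :=
    ((hXmeas _ _ _).abs.div_const _).ennreal_ofReal.aemeasurable
  have hweights := tsum_tsum_ofReal_inv_waveletWeight_pow_lt_top (α := α) (a := a) (m := 2 * p)
    (by push_cast; linarith) (by push_cast; linarith)
  have hgauss := lintegral_ofReal_abs_pow_gaussianReal_lt_top 0 1 (2 * p)
  have hsum : ∑' i, ∫⁻ ω, f i ω ^ (2 * p) ∂P < ∞ := by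
    simp only [f, lintegral_ofReal_abs_div_pow_of_map_eq (hXmeas _ _ _) (hXlaw _ _ _),
      ENNReal.tsum_prod', ENNReal.tsum_mul_right, tsum_fintype, Finset.sum_const,
      Finset.card_univ, nsmul_eq_mul, ENNReal.tsum_mul_left]
    finiteness
  simpa only [f, iSup_prod, waveletWeight, dyadicPoint] using
    lintegral_iSup_pow_lt_top_of_tsum_lt_top hf hp hsum

/-- for white noise on `ℝ²` tested against an `L²`-normalized wavelet basis
`ψ^n_x`, `x ∈ Λ_n = 2^{-n}ℤ²`, `ψ` in a finite set `Ψ`, and for `α < -1`, `a > 0`, `p ∈ ℕ`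
with `2pa > 2` and `2p(α+1) < -2`, the `2p`-th moment of
`sup_{n,ψ,x} |⟨ξ,ψ^n_x⟩| / (2^{-n(α+1)} (1+|x|)^a)` is finite; in particular the
supremum is a.s. finite.  The wavelet evaluations `⟨ξ,ψ^n_x⟩` (with `x = 2^{-n}k`) are
encoded as random variables `X n ψ k`, each standard Gaussian since `‖ψ^n_x‖_{L²} = 1`. -/
theorem white_noise_wavelet_sup_moment
    (Ω : Type*) [MeasurableSpace Ω] (P : Measure Ω) [IsProbabilityMeasure P]
    (Ψ : Type*) [Fintype Ψ] [Nonempty Ψ]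
    (X : ℕ → Ψ → (Fin 2 → ℤ) → Ω → ℝ)
    (hXmeas : ∀ n ψ k, Measurable (X n ψ k))
    (hXlaw : ∀ n ψ k, P.map (X n ψ k) = gaussianReal 0 1)
    (α a : ℝ) (hα : α < -1) (ha : 0 < a) (p : ℕ)
    (hp1 : 2 < 2 * (p : ℝ) * a) (hp2 : 2 * (p : ℝ) * (α + 1) < -2) :
    (∫⁻ ω, ⨆ (n : ℕ) (ψ : Ψ) (k : Fin 2 → ℤ),
        (ENNReal.ofReal (|X n ψ k ω| /
          ((2 : ℝ) ^ (-(n : ℝ) * (α + 1)) *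
            (1 + ‖(WithLp.equiv 2 (Fin 2 → ℝ)).symm
              (fun i => (2 : ℝ) ^ (-(n : ℤ)) * (k i : ℝ))‖) ^ a))) ^ (2 * p) ∂P) < ⊤ ∧
    ∀ᵐ ω ∂P, (⨆ (n : ℕ) (ψ : Ψ) (k : Fin 2 → ℤ),
        ENNReal.ofReal (|X n ψ k ω| /
          ((2 : ℝ) ^ (-(n : ℝ) * (α + 1)) *
            (1 + ‖(WithLp.equiv 2 (Fin 2 → ℝ)).symm
              (fun i => (2 : ℝ) ^ (-(n : ℤ)) * (k i : ℝ))‖) ^ a))) < ⊤ :=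
  white_noise_wavelet_sup_moment_general Ω P Ψ X hXmeas hXlaw α a p hp1 hp2
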